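/- For every natural number n and every real x, lim_{s→∞} s^{−n/2} P_n^{(s,s)}(x/√s) = H_n(x)/(2^n n!), where P_n^{(α,β)} is the Jacobi polynomial and H_n is the (physicists') Hermite polynomial. -/

import Mathlib

/-- The Jacobi polynomial `P_n^{(a,b)}(x)`, via its standard finite-sum formula. -/
noncomputable def jacobiP (a b : ℝ) (n : ℕ) (x : ℝ) : ℝ :=
  ∑ s ∈ Finset.range (n + 1),
    Ring.choose (a + n) (n - s) * Ring.choose (b + n) s *
      ((x - 1) / 2) ^ s * ((x + 1) / 2) ^ (n - s)

/-- The physicists' Hermite polynomials, via their recurrence. -/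
noncomputable def hermiteH : ℕ → ℝ → ℝ
  | 0 => fun _ => 1
  | 1 => fun x => 2 * x
  | (n + 2) => fun x => 2 * x * hermiteH (n + 1) x - 2 * (n + 1) * hermiteH n x

/-!
With `u = (y - 1) / 2`, `v = (y + 1) / 2` and `z = a + n`, the polynomial `P_n^{(a,a)}(y)` is the
coefficient of `t^n` in `(1 + u t)^z (1 + v t)^z = (1 + y t + u v t^2)^z`, that is
`∑_{q + m = n} C(z, m) C(m, q) (u v)^q y^(m - q)`; Vandermonde's identity proves this regrouping,
which makes the cancellation between the terms of the defining sum explicit.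
For `y = x / √s` and `z = s + n` the scaled `(q, m)` term is
`C(s + n, m) / s^m · C(m, q) ((x^2 / s - 1) / 4)^q x^(m - q)`, which tends to
`C(m, q) / m! · (-1/4)^q x^(m - q)`. Summed over `q + m = n` this is the coefficient of `t^n` in
`exp(x t - t^2 / 4) = ∑ H_n(x) (t / 2)^n / n!`, which is checked through the three-term
recurrence of `H_n`.
-/

open Finset Filter Topology
open scoped Nat

section BinomialRing

variable {R : Type*} [CommRing R] [BinomialRing R]

theorem Ring.choose_mul_choose_eq_sum (z : R) (k l : ℕ) :
    Ring.choose z k * Ring.choose z l =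
      ∑ p ∈ antidiagonal l,
        (k.choose p.1 * (k + p.2).choose k : ℕ) * Ring.choose z (k + p.2) := by
  have hz : Ring.choose z l =
      ∑ p ∈ antidiagonal l, (k.choose p.1 : R) * Ring.choose (z - k) p.2 := by
    simpa [Ring.choose_natCast] using Ring.add_choose_eq (r := (k : R)) (s := z - k) l (.all _ _)
  rw [hz, mul_sum]
  refine sum_congr rfl fun p _ => ?_
  have h := Ring.choose_smul_choose z (Nat.le_add_right k p.2)
  rw [nsmul_eq_mul, Nat.add_sub_cancel_left] at h
  push_cast
  linear_combination (k.choose p.1 : R) * h.symm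

theorem Ring.sum_antidiagonal_choose_mul_choose_mul_pow (z u v : R) (n : ℕ) :
    ∑ p ∈ antidiagonal n, Ring.choose z p.1 * Ring.choose z p.2 * u ^ p.1 * v ^ p.2 =
      ∑ p ∈ antidiagonal n,
        Ring.choose z p.2 * p.2.choose p.1 * (u * v) ^ p.1 * (u + v) ^ (p.2 - p.1) := by
  have hterm (q a b : ℕ) :
      Ring.choose z (q + a + b) * (q + a + b).choose q * (u * v) ^ q *
          (q + a + b - q).choose a • (u ^ a * v ^ b) =
        ((q + a).choose q * (q + a + b).choose (q + a) : ℕ) * Ring.choose z (q + a + b) *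
          u ^ (q + a) * v ^ (q + b) := by
    have h := Nat.choose_mul (n := q + a + b) (Nat.le_add_right q a)
    rw [Nat.add_sub_cancel_left] at h
    rw [mul_comm ((q + a).choose q), h, nsmul_eq_mul, pow_add, pow_add, mul_pow]
    push_cast
    ring
  simp_rw [Ring.choose_mul_choose_eq_sum, sum_mul, (Commute.all u v).add_pow', mul_sum]
  rw [sum_sigma', sum_sigma']
  symm
  -- the `(q, m, a, b)` term on the right is the `(q + a, q + b, q, b)` term on the left
  refine sum_bij_ne_zero (fun i _ _ => ⟨(i.1.1 + i.2.1, i.1.1 + i.2.2), (i.1.1, i.2.2)⟩)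
    ?_ ?_ ?_ ?_
  · rintro ⟨⟨q, m⟩, ⟨a, b⟩⟩ hi hne
    have hqm : q ≤ m := not_lt.mp fun h => hne (by simp [Nat.choose_eq_zero_of_lt h])
    simp only [mem_sigma, HasAntidiagonal.mem_antidiagonal, and_true] at hi ⊢
    omega
  · rintro ⟨⟨q, m⟩, ⟨a, b⟩⟩ hi _ ⟨⟨q', m'⟩, ⟨a', b'⟩⟩ hi' _ h
    simp only [mem_sigma, HasAntidiagonal.mem_antidiagonal] at hi hi'
    simp only [Sigma.mk.injEq, Prod.mk.injEq, heq_eq_eq] at h ⊢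
    omega
  · rintro ⟨⟨k, l⟩, ⟨q, j⟩⟩ hi hne
    have hqk : q ≤ k := not_lt.mp fun h => hne (by simp [Nat.choose_eq_zero_of_lt h])
    simp only [mem_sigma, HasAntidiagonal.mem_antidiagonal] at hi
    obtain ⟨a, rfl⟩ := Nat.exists_eq_add_of_le hqk
    obtain rfl : l = q + j := hi.2.symm
    refine ⟨⟨(q, q + a + j), (a, j)⟩, ?_, ?_, ?_⟩
    · simp only [mem_sigma, HasAntidiagonal.mem_antidiagonal]; omega
    · simpa only [hterm] using hne
    · simp
  · rintro ⟨⟨q, m⟩, ⟨a, b⟩⟩ hi hne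
    simp only [mem_sigma, HasAntidiagonal.mem_antidiagonal] at hi
    have hqm : q ≤ m := not_lt.mp fun h => hne (by simp [Nat.choose_eq_zero_of_lt h])
    obtain rfl : m = q + a + b := by omega
    exact hterm q a b

end BinomialRing

theorem jacobiP_self_eq_sum (a y : ℝ) (n : ℕ) :
    jacobiP a a n y = ∑ p ∈ antidiagonal n,
      Ring.choose (a + n) p.2 * p.2.choose p.1 * ((y ^ 2 - 1) / 4) ^ p.1 * y ^ (p.2 - p.1) := by
  have h := Ring.sum_antidiagonal_choose_mul_choose_mul_pow (a + n) ((y - 1) / 2) ((y + 1) / 2) n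
  rw [show (y - 1) / 2 * ((y + 1) / 2) = (y ^ 2 - 1) / 4 by ring,
    show (y - 1) / 2 + (y + 1) / 2 = y by ring, Nat.sum_antidiagonal_eq_sum_range_succ
      (fun k l => Ring.choose (a + n) k * Ring.choose (a + n) l * ((y - 1) / 2) ^ k *
        ((y + 1) / 2) ^ l)] at h
  rw [jacobiP, ← h]
  exact sum_congr rfl fun k _ => by ring

noncomputable def expQuadraticTerm (b c : ℝ) (q m : ℕ) : ℝ :=
  (m.choose q : ℝ) / m ! * c ^ q * b ^ (m - q)

/-- The coefficient of `t ^ n` in `exp (b t + c t ^ 2) = ∑ₘ tᵐ (b + c t)ᵐ / m!`. -/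
noncomputable def expQuadraticCoeff (b c : ℝ) (n : ℕ) : ℝ :=
  ∑ p ∈ antidiagonal n, expQuadraticTerm b c p.1 p.2

namespace expQuadraticTerm

variable (b c : ℝ)

theorem self_add (q r : ℕ) : expQuadraticTerm b c q (q + r) = c ^ q / q ! * (b ^ r / r !) := by
  rw [expQuadraticTerm, Nat.cast_add_choose, Nat.add_sub_cancel_left]
  field_simp

theorem of_lt {q m : ℕ} (h : m < q) : expQuadraticTerm b c q m = 0 := by
  simp [expQuadraticTerm, Nat.choose_eq_zero_of_lt h]

theorem sub_mul_succ (q m : ℕ) :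
    ((m : ℝ) + 1 - q) * expQuadraticTerm b c q (m + 1) = b * expQuadraticTerm b c q m := by
  rcases le_or_gt q m with h | h
  · obtain ⟨r, rfl⟩ := Nat.exists_eq_add_of_le h
    rw [Nat.add_assoc, self_add, self_add, Nat.factorial_succ, pow_succ]
    push_cast
    field_simp
    ring
  · rw [of_lt b c h]
    rcases (Nat.succ_le_of_lt h).eq_or_lt with rfl | h'
    · push_cast; ring
    · rw [of_lt b c h', mul_zero, mul_zero]

theorem succ_mul_succ_succ (q m : ℕ) :
    ((q : ℝ) + 1) * expQuadraticTerm b c (q + 1) (m + 1) = c * expQuadraticTerm b c q m := by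
  rcases le_or_gt q m with h | h
  · obtain ⟨r, rfl⟩ := Nat.exists_eq_add_of_le h
    rw [Nat.add_right_comm, self_add, self_add, Nat.factorial_succ, pow_succ]
    push_cast
    field_simp
  · rw [of_lt b c h, of_lt b c (Nat.succ_lt_succ h), mul_zero, mul_zero]

end expQuadraticTerm

theorem expQuadraticCoeff_zero (b c : ℝ) : expQuadraticCoeff b c 0 = 1 := by
  simp [expQuadraticCoeff, expQuadraticTerm]

theorem expQuadraticCoeff_one (b c : ℝ) : expQuadraticCoeff b c 1 = b := by
  simp [expQuadraticCoeff, expQuadraticTerm, Nat.sum_antidiagonal_succ]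

theorem expQuadraticCoeff_add_two (b c : ℝ) (n : ℕ) :
    ((n : ℝ) + 2) * expQuadraticCoeff b c (n + 2) =
      b * expQuadraticCoeff b c (n + 1) + 2 * c * expQuadraticCoeff b c n := by
  have hvanish : expQuadraticTerm b c (n + 1 + 1) 0 = 0 :=
    expQuadraticTerm.of_lt b c n.succ.succ_pos
  -- the weight `q + m` splits as `2 q + (m - q)`: the first part lowers `q`, the second `m`
  have hweight : ((n : ℝ) + 2) * expQuadraticCoeff b c (n + 2) =
      2 * ∑ p ∈ antidiagonal (n + 2), (p.1 : ℝ) * expQuadraticTerm b c p.1 p.2 +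
        ∑ p ∈ antidiagonal (n + 2), ((p.2 : ℝ) - p.1) * expQuadraticTerm b c p.1 p.2 := by
    rw [expQuadraticCoeff, mul_sum, mul_sum, ← sum_add_distrib]
    refine sum_congr rfl fun p hp => ?_
    have h : (p.1 : ℝ) + p.2 = n + 2 := by exact_mod_cast HasAntidiagonal.mem_antidiagonal.mp hp
    linear_combination (-expQuadraticTerm b c p.1 p.2) * h
  have hfirst : ∑ p ∈ antidiagonal (n + 2), (p.1 : ℝ) * expQuadraticTerm b c p.1 p.2 =
      c * expQuadraticCoeff b c n := by
    rw [Nat.sum_antidiagonal_succ, Nat.sum_antidiagonal_succ', expQuadraticCoeff, mul_sum]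
    simp only [Nat.cast_zero, zero_mul, zero_add, Nat.cast_add, Nat.cast_one, hvanish, mul_zero]
    exact sum_congr rfl fun p _ => expQuadraticTerm.succ_mul_succ_succ b c p.1 p.2
  have hsecond :
      ∑ p ∈ antidiagonal (n + 2), ((p.2 : ℝ) - p.1) * expQuadraticTerm b c p.1 p.2 =
        b * expQuadraticCoeff b c (n + 1) := by
    rw [Nat.sum_antidiagonal_succ', expQuadraticCoeff, mul_sum]
    simp only [hvanish, mul_zero, zero_add]
    refine sum_congr rfl fun p _ => ?_
    rw [← expQuadraticTerm.sub_mul_succ]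
    push_cast
    ring
  rw [hweight, hfirst, hsecond]
  ring

theorem hermiteH_eq_expQuadraticCoeff (x : ℝ) :
    ∀ n, hermiteH n x = 2 ^ n * n ! * expQuadraticCoeff x (-1 / 4) n
  | 0 => by simp [hermiteH, expQuadraticCoeff_zero]
  | 1 => by simp [hermiteH, expQuadraticCoeff_one]
  | n + 2 => by
    have h := expQuadraticCoeff_add_two x (-1 / 4) n
    simp only [hermiteH]
    rw [hermiteH_eq_expQuadraticCoeff x (n + 1), hermiteH_eq_expQuadraticCoeff x n,
      Nat.factorial_succ (n + 1), Nat.factorial_succ n]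
    push_cast
    linear_combination (-2 ^ (n + 2) * ((n : ℝ) + 1) * n !) * h

theorem tendsto_choose_add_div_pow (c : ℝ) (m : ℕ) :
    Tendsto (fun s : ℝ => Ring.choose (s + c) m / s ^ m) atTop (𝓝 (m ! : ℝ)⁻¹) := by
  have hfactor (j : ℕ) : Tendsto (fun s : ℝ => 1 + (c - j) * s⁻¹) atTop (𝓝 1) := by
    simpa using tendsto_const_nhds.add (tendsto_inv_atTop_zero.const_mul (c - j))
  have hprod := (tendsto_finsetProd (range m) fun j _ => hfactor j).const_mul (m ! : ℝ)⁻¹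
  rw [prod_const_one, mul_one] at hprod
  refine hprod.congr' ?_
  filter_upwards [eventually_gt_atTop 0] with s hs
  have hpow : s ^ m = ∏ _j ∈ range m, s := by simp
  rw [hpow, Ring.choose_eq_smul, smul_eq_mul, ← Polynomial.aeval_eq_smeval, Polynomial.aeval_def,
    Polynomial.eval₂_eq_eval_map, descPochhammer_map, descPochhammer_eval_eq_prod_range,
    mul_div_assoc, ← prod_div_distrib]
  congr 1
  refine prod_congr rfl fun j _ => ?_
  field_simp
  ring

theorem rpow_neg_div_two_mul_div_sqrt_pow {s : ℝ} (hs : 0 < s) (x : ℝ) {q m : ℕ}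
    (h : q ≤ m) :
    s ^ (-((q + m : ℕ) : ℝ) / 2) * (x / √s) ^ (m - q) = x ^ (m - q) / s ^ m := by
  have hsqrt : √s ^ (q + m) * √s ^ (m - q) = s ^ m := by
    rw [← pow_add, show q + m + (m - q) = 2 * m by omega, pow_mul, Real.sq_sqrt hs.le]
  rw [Real.rpow_div_two_eq_sqrt _ hs.le, Real.rpow_neg (Real.sqrt_nonneg s), Real.rpow_natCast,
    div_pow, ← hsqrt]
  field_simp

theorem tendsto_choose_add_div_pow_mul_expQuadraticTerm (x c : ℝ) (q m : ℕ) :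
    Tendsto (fun s : ℝ => Ring.choose (s + c) m / s ^ m * m.choose q *
      ((x ^ 2 / s - 1) / 4) ^ q * x ^ (m - q)) atTop (𝓝 (expQuadraticTerm x (-1 / 4) q m)) := by
  have hbase : Tendsto (fun s : ℝ => (x ^ 2 / s - 1) / 4) atTop (𝓝 (-1 / 4)) := by
    simpa using (((tendsto_const_nhds (x := x ^ 2)).div_atTop tendsto_id).sub_const 1).div_const 4
  convert (((tendsto_choose_add_div_pow c m).mul_const _).mul (hbase.pow q)).mul_const _ using 2
  rw [expQuadraticTerm]
  ring

/-- In the strong-coupling limit, Jacobi polynomials degenerate to Hermite ones. -/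
theorem jacobi_tendsto_hermite (n : ℕ) (x : ℝ) :
    Filter.Tendsto (fun s : ℝ => s ^ (-(n : ℝ) / 2) * jacobiP s s n (x / Real.sqrt s))
      Filter.atTop (nhds (hermiteH n x / (2 ^ n * n.factorial))) := by
  rw [hermiteH_eq_expQuadraticCoeff, mul_div_cancel_left₀ _ (by positivity), expQuadraticCoeff]
  refine (tendsto_finsetSum _ fun p _ =>
    tendsto_choose_add_div_pow_mul_expQuadraticTerm x n p.1 p.2).congr' ?_
  filter_upwards [eventually_gt_atTop 0] with s hs
  rw [jacobiP_self_eq_sum, mul_sum]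
  refine sum_congr rfl fun p hp => ?_
  rcases le_or_gt p.1 p.2 with hle | hlt
  · rw [← HasAntidiagonal.mem_antidiagonal.mp hp, div_pow x, Real.sq_sqrt hs.le]
    linear_combination (-(Ring.choose (s + ↑(p.1 + p.2)) p.2 * p.2.choose p.1 *
      ((x ^ 2 / s - 1) / 4) ^ p.1)) * rpow_neg_div_two_mul_div_sqrt_pow hs x hle
  · simp [Nat.choose_eq_zero_of_lt hlt]
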